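/- Let c₁, c₂ be real constants with c₃ = c₁ + c₂·α > 0, where α = lim_{r→∞} F(r), and set Ĝ = c₁·G₁ + c₂·G₂. Then there exists R₀ > A such that Ĝ(r) > 0 for all r ≥ R₀, and lim_{r→∞} (log r)·( r·Ĝ'(r)/Ĝ(r) − 1 ) = 1 + ε. In particular, Ĝ'(r)/Ĝ(r) = 1/r + (1+ε)/(r·log r) + o(1/(r·log r)) as r → ∞. -/

import Mathlib

open Real Filter intervalIntegral Asymptotics

/-!
Write `Ĝ = φ · G₁` with `φ = c₁ + c₂ F`, so that `φ → c₁ + c₂ α > 0`, which makes `Ĝ` eventually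
positive. Since `r G₁'/G₁ = 1 + (1 + ε) / log r` exactly,
`log r · (r Ĝ'/Ĝ − 1) = 1 + ε + r log r · φ'/φ`, and `φ' = c₂ / (r² (log r)^{2+2ε})` makes the last
term `O(1 / (r (log r)^{1+2ε})) → 0`.
-/

theorem hasDerivAt_mul_log_rpow {p r : ℝ} (hr : log r ≠ 0) :
    HasDerivAt (fun x => x * log x ^ p) (log r ^ p + p * log r ^ (p - 1)) r := by
  have hr0 : r ≠ 0 := fun h => hr (by simp [h])
  have hlog : HasDerivAt (fun x => log x ^ p) (p * log r ^ (p - 1) * r⁻¹) r :=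
    (Real.hasDerivAt_rpow_const (Or.inl hr)).comp r (Real.hasDerivAt_log hr0)
  refine ((hasDerivAt_id' r).mul hlog).congr_deriv ?_
  field_simp

theorem hasDerivAt_of_forall_eq_integral {f F : ℝ → ℝ} {A r : ℝ}
    (hf : ContinuousOn f (Set.Ici A)) (hF : ∀ x, A ≤ x → F x = ∫ s in A..x, f s)
    (hr : A < r) : HasDerivAt F (f r) r := by
  have hint : IntervalIntegrable f MeasureTheory.volume A r :=
    (hf.mono (by simp [Set.uIcc_of_le hr.le, Set.Icc_subset_Ici_self])).intervalIntegrable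
  have hfIoi : ContinuousOn f (Set.Ioi A) := hf.mono Set.Ioi_subset_Ici_self
  refine (integral_hasDerivAt_right hint (hfIoi.stronglyMeasurableAtFilter isOpen_Ioi r hr)
    (hfIoi.continuousAt (Ioi_mem_nhds hr))).congr_of_eventuallyEq ?_
  filter_upwards [Ioi_mem_nhds hr] with x hx
  exact hF x (le_of_lt hx)

theorem continuousOn_one_div_sq_mul_log_rpow (q : ℝ) :
    ContinuousOn (fun s => 1 / (s ^ 2 * log s ^ q)) (Set.Ioi 1) := by
  intro s hs
  have hL : 0 < log s := log_pos hs
  have hs0 : s ≠ 0 := (zero_lt_one.trans hs).ne'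
  have hden : ContinuousAt (fun s => s ^ 2 * log s ^ q) s :=
    (continuousAt_id.pow 2).mul ((continuousAt_log hs0).rpow_const (Or.inl hL.ne'))
  exact (continuousAt_const.div hden
    (mul_ne_zero (pow_ne_zero 2 hs0) (rpow_pos_of_pos hL q).ne')).continuousWithinAt

theorem log_mul_logDeriv_mul_log_rpow_sub_one {φ : ℝ → ℝ} {φ' p r : ℝ}
    (hφ : HasDerivAt φ φ' r) (hφr : φ r ≠ 0) (hr : 1 < r) :
    log r * (r * deriv (fun x => φ x * (x * log x ^ p)) r / (φ r * (r * log r ^ p)) - 1) =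
      p + r * log r * φ' / φ r := by
  have hL : 0 < log r := log_pos hr
  have hLp : 0 < log r ^ p := rpow_pos_of_pos hL p
  have hd : HasDerivAt (fun x => φ x * (x * log x ^ p))
      (φ' * (r * log r ^ p) + φ r * (log r ^ p + p * log r ^ (p - 1))) r :=
    hφ.mul (hasDerivAt_mul_log_rpow hL.ne')
  rw [hd.deriv, rpow_sub_one hL.ne']
  field_simp
  ring

theorem tendsto_mul_log_div_sq_mul_log_rpow {q : ℝ} (hq : 1 < q) :
    Tendsto (fun r => r * log r * (1 / (r ^ 2 * log r ^ q))) atTop (nhds 0) := by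
  have hden : Tendsto (fun r => r * log r ^ (q - 1)) atTop atTop :=
    tendsto_id.atTop_mul_atTop₀ ((tendsto_rpow_atTop (sub_pos.2 hq)).comp tendsto_log_atTop)
  refine (tendsto_inv_atTop_zero.comp hden).congr' ?_
  filter_upwards [eventually_gt_atTop 1] with r hr
  have hL : 0 < log r := log_pos hr
  have hLq : 0 < log r ^ q := rpow_pos_of_pos hL q
  have hr0 : 0 < r := by linarith
  simp only [Function.comp_apply, rpow_sub_one hL.ne']
  field_simp

theorem isLittleO_logDeriv_sub_of_tendsto_log_mul {g : ℝ → ℝ} {p : ℝ}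
    (h : Tendsto (fun r => log r * (r * g r - 1)) atTop (nhds p)) :
    (fun r => g r - (1 / r + p / (r * log r))) =o[atTop] fun r => 1 / (r * log r) := by
  rw [isLittleO_iff_tendsto']
  · have h0 : Tendsto (fun r => log r * (r * g r - 1) - p) atTop (nhds 0) := by
      simpa using h.sub_const p
    refine h0.congr' ?_
    filter_upwards [eventually_gt_atTop 1] with r hr
    have hL : 0 < log r := log_pos hr
    have hr0 : 0 < r := by linarith
    field_simp
    ring
  · filter_upwards [eventually_gt_atTop 1] with r hr h
    have : 0 < 1 / (r * log r) := by have := log_pos hr; positivity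
    exact absurd h this.ne'

theorem stmt_6_general (ε A : ℝ) (hε : 0 < ε) (hA : 1 < A)
    (G₁ : ℝ → ℝ) (hG₁ : ∀ r : ℝ, G₁ r = r * Real.log r ^ (1 + ε))
    (F : ℝ → ℝ)
    (hF : ∀ r : ℝ, A ≤ r → F r = ∫ s in A..r, 1 / (s ^ 2 * Real.log s ^ (2 + 2 * ε)))
    (G₂ : ℝ → ℝ) (hG₂ : ∀ r : ℝ, G₂ r = F r * G₁ r)
    (α : ℝ) (hαlim : Tendsto F atTop (nhds α))
    (c₁ c₂ : ℝ) (hc₃ : 0 < c₁ + c₂ * α)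
    (Ghat : ℝ → ℝ) (hGhat : ∀ r : ℝ, Ghat r = c₁ * G₁ r + c₂ * G₂ r) :
    (∃ R₀ : ℝ, A < R₀ ∧ ∀ r : ℝ, R₀ ≤ r → 0 < Ghat r) ∧
      Tendsto (fun r : ℝ => Real.log r * (r * deriv Ghat r / Ghat r - 1))
        atTop (nhds (1 + ε)) ∧
      (fun r : ℝ =>
          deriv Ghat r / Ghat r - (1 / r + (1 + ε) / (r * Real.log r)))
        =o[atTop] fun r : ℝ => 1 / (r * Real.log r) := by
  set f : ℝ → ℝ := fun s => 1 / (s ^ 2 * log s ^ (2 + 2 * ε))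
  set φ : ℝ → ℝ := fun r => c₁ + c₂ * F r
  have hGhat_eq : Ghat = fun r => φ r * (r * log r ^ (1 + ε)) := by
    funext r; rw [hGhat, hG₂, hG₁]; ring
  have hφ : Tendsto φ atTop (nhds (c₁ + c₂ * α)) := (hαlim.const_mul c₂).const_add c₁
  have hf : ContinuousOn f (Set.Ici A) :=
    (continuousOn_one_div_sq_mul_log_rpow (2 + 2 * ε)).mono (Set.Ici_subset_Ioi.2 hA)
  have hφ' : ∀ r, A < r → HasDerivAt φ (c₂ * f r) r := fun r hr =>
    ((hasDerivAt_of_forall_eq_integral hf hF hr).const_mul c₂).const_add c₁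
  have hpos : ∀ᶠ r in atTop, A < r ∧ 0 < φ r :=
    (eventually_gt_atTop A).and (hφ.eventually (eventually_gt_nhds hc₃))
  have hlim : Tendsto (fun r => log r * (r * deriv Ghat r / Ghat r - 1)) atTop
      (nhds (1 + ε)) := by
    have h := tendsto_const_nhds (x := 1 + ε) |>.add
      (((tendsto_mul_log_div_sq_mul_log_rpow (q := 2 + 2 * ε) (by linarith)).const_mul c₂).div
        hφ hc₃.ne')
    rw [mul_zero, zero_div, add_zero] at h
    refine h.congr' ?_
    filter_upwards [hpos] with r ⟨hr, hφr⟩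
    rw [hGhat_eq, log_mul_logDeriv_mul_log_rpow_sub_one (hφ' r hr) hφr.ne' (hA.trans hr)]
    simp only [Pi.div_apply, f]
    ring
  refine ⟨?_, hlim, isLittleO_logDeriv_sub_of_tendsto_log_mul (by
    simpa only [mul_div_assoc] using hlim)⟩
  obtain ⟨R₀, hR₀⟩ := eventually_atTop.1 hpos
  refine ⟨R₀, (hR₀ R₀ le_rfl).1, fun r hr => ?_⟩
  obtain ⟨hAr, hφr⟩ := hR₀ r hr
  have hr1 : 1 < r := hA.trans hAr
  rw [hGhat_eq]
  exact mul_pos hφr (mul_pos (by linarith) (rpow_pos_of_pos (log_pos hr1) _))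

/-- Let `c₃ = c₁ + c₂ α > 0` and `Ĝ = c₁ G₁ + c₂ G₂`. Then there exists
`R₀ > A` with `Ĝ r > 0` for all `r ≥ R₀`, and
`(log r) (r Ĝ' r / Ĝ r − 1) → 1 + ε` as `r → ∞`. In particular,
`Ĝ'/Ĝ = 1/r + (1+ε)/(r log r) + o(1/(r log r))` as `r → ∞`. -/
theorem stmt_6 (ε A : ℝ) (hε : 0 < ε) (hA : 1 < A)
    (G₁ : ℝ → ℝ) (hG₁ : ∀ r : ℝ, G₁ r = r * Real.log r ^ (1 + ε))
    (F : ℝ → ℝ)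
    (hF : ∀ r : ℝ, A ≤ r → F r = ∫ s in A..r, 1 / (s ^ 2 * Real.log s ^ (2 + 2 * ε)))
    (G₂ : ℝ → ℝ) (hG₂ : ∀ r : ℝ, G₂ r = F r * G₁ r)
    (α : ℝ) (hα : 0 < α) (hαlim : Tendsto F atTop (nhds α))
    (c₁ c₂ : ℝ) (hc₃ : 0 < c₁ + c₂ * α)
    (Ghat : ℝ → ℝ) (hGhat : ∀ r : ℝ, Ghat r = c₁ * G₁ r + c₂ * G₂ r) :
    (∃ R₀ : ℝ, A < R₀ ∧ ∀ r : ℝ, R₀ ≤ r → 0 < Ghat r) ∧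
      Tendsto (fun r : ℝ => Real.log r * (r * deriv Ghat r / Ghat r - 1))
        atTop (nhds (1 + ε)) ∧
      (fun r : ℝ =>
          deriv Ghat r / Ghat r - (1 / r + (1 + ε) / (r * Real.log r)))
        =o[atTop] fun r : ℝ => 1 / (r * Real.log r) :=
  stmt_6_general ε A hε hA G₁ hG₁ F hF G₂ hG₂ α hαlim c₁ c₂ hc₃ Ghat hGhat
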